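/- arXiv:0704.2378 — 7 statements merged into one kernel-verified Lean document; each statement's English description precedes it below -/
import Mathlib

section
/- Let K be a field, A a K-algebra, V a K-subspace of A with 1 ∈ V, and z ∈ A. Order ℕ × ℕ by (m₁,p₁) ≺ (m₂,p₂) iff m₁+p₁ < m₂+p₂ or (m₁+p₁ = m₂+p₂ and m₁ < m₂). Suppose that for every (m,p) ∈ ℕ × ℕ with m,p ≥ 1, the space V^m z V^p is not contained in Σ_{(i,j) ≺ (m,p)} V^i z V^j. Then for every n ≥ 1, dim_K(V^n z V^n) ≥ n². -/
/-!
Choose `x m p ∈ V ^ m * K z * V ^ p` outside the sum of the earlier pieces `V ^ i * K z * V ^ j`,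
`(i, j) ≺ (m, p)`. Since `≺` is a linear order, the `≺`-largest term of a vanishing linear
combination of the `x m p` would lie in the span of earlier ones, hence in the sum of earlier
pieces; so the `n ^ 2` vectors with `1 ≤ m, p ≤ n` are independent, and since `1 ∈ V` they all
lie in `V ^ n * K z * V ^ n`.
-/

/-- The order `(m₁,p₁) ≺ (m₂,p₂)` iff `m₁+p₁ < m₂+p₂`, or `m₁+p₁ = m₂+p₂` and `m₁ < m₂`. -/
def paperRel (a b : ℕ × ℕ) : Prop :=
  a.1 + a.2 < b.1 + b.2 ∨ (a.1 + a.2 = b.1 + b.2 ∧ a.1 < b.1)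

open Submodule Function

theorem linearIndependent_of_notMem_span_image_key_lt {K M ι β : Type*} [DivisionRing K]
    [AddCommGroup M] [Module K M] [LinearOrder β] {v : ι → M} {key : ι → β}
    (hkey : Injective key) (hv : ∀ i, v i ∉ span K (v '' {j | key j < key i})) :
    LinearIndependent K v := by
  classical
  rw [linearIndependent_iff']
  intro s
  induction s using Finset.induction_on_max_value key with
  | empty => simp
  | insert a s has hmax ih =>
    intro g hsum
    rw [Finset.sum_insert has] at hsum
    have hrest : ∑ i ∈ s, g i • v i ∈ span K (v '' {j | key j < key a}) := by
      refine sum_mem fun i hi => smul_mem _ _ (subset_span ⟨i, ?_, rfl⟩)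
      exact (hmax i hi).lt_of_ne (hkey.ne (ne_of_mem_of_not_mem hi has))
    have hga : g a = 0 := by
      by_contra hga
      refine hv a ?_
      rw [← inv_smul_smul₀ hga (v a), eq_neg_of_add_eq_zero_left hsum]
      exact smul_mem _ _ (neg_mem hrest)
    rw [hga, zero_smul, zero_add] at hsum
    intro i hi
    rcases Finset.mem_insert.1 hi with rfl | hi
    exacts [hga, ih g hsum i hi]

def paperRelKey (q : ℕ × ℕ) : ℕ ×ₗ ℕ := toLex (q.1 + q.2, q.1)

theorem paperRel_iff_paperRelKey_lt {a b : ℕ × ℕ} :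
    paperRel a b ↔ paperRelKey a < paperRelKey b := by
  rw [paperRelKey, paperRelKey, Prod.Lex.toLex_lt_toLex]
  rfl

theorem paperRelKey_injective : Injective paperRelKey := by
  rintro ⟨a₁, a₂⟩ ⟨b₁, b₂⟩ h
  simp only [paperRelKey, toLex_inj, Prod.mk.injEq] at h
  ext <;> omega

theorem pow_mul_span_mul_pow_mono {K A : Type*} [Field K] [Ring A] [Algebra K A]
    {V : Submodule K A} (hV : (1 : A) ∈ V) (z : A) {m m' p p' : ℕ}
    (hm : m ≤ m') (hp : p ≤ p') :
    V ^ m * span K {z} * V ^ p ≤ V ^ m' * span K {z} * V ^ p' :=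
  mul_le_mul' (mul_le_mul' (pow_le_pow_right' (one_le.2 hV) hm) le_rfl)
    (pow_le_pow_right' (one_le.2 hV) hp)

theorem stmt3 {K A : Type*} [Field K] [Ring A] [Algebra K A]
    (V : Submodule K A) (hV : (1 : A) ∈ V) (z : A)
    (h : ∀ m p : ℕ, 1 ≤ m → 1 ≤ p →
      ¬ (V ^ m * Submodule.span K {z} * V ^ p ≤
        ⨆ (q : ℕ × ℕ) (_ : paperRel q (m, p)), V ^ q.1 * Submodule.span K {z} * V ^ q.2)) :
    ∀ n : ℕ, 1 ≤ n →
      (n ^ 2 : Cardinal) ≤ Module.rank K (V ^ n * Submodule.span K {z} * V ^ n : Submodule K A) := by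
  intro n _
  choose x hx hxn using fun q : ℕ × ℕ => SetLike.not_le_iff_exists.1
    (h (q.1 + 1) (q.2 + 1) (Nat.le_add_left 1 q.1) (Nat.le_add_left 1 q.2))
  let v : Fin n × Fin n → A := fun q => x (q.1, q.2)
  let shift : Fin n × Fin n → ℕ × ℕ := fun q => (q.1 + 1, q.2 + 1)
  have hli : LinearIndependent K v := by
    refine linearIndependent_of_notMem_span_image_key_lt (key := paperRelKey ∘ shift)
      (paperRelKey_injective.comp fun q r hqr => by ext <;> simp_all [shift]) fun q hspan => ?_
    refine hxn (q.1, q.2) (span_le.2 ?_ hspan)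
    rintro _ ⟨r, hr, rfl⟩
    exact mem_iSup_of_mem (shift r)
      (mem_iSup_of_mem (paperRel_iff_paperRelKey_lt.2 hr) (hx (r.1, r.2)))
  have hmem : ∀ q, v q ∈ V ^ n * span K {z} * V ^ n := fun q =>
    pow_mul_span_mul_pow_mono hV z q.1.isLt q.2.isLt (hx (q.1, q.2))
  have hrank := (LinearIndependent.of_comp (Submodule.subtype _)
    (v := fun q => (⟨v q, hmem q⟩ : V ^ n * span K {z} * V ^ n)) hli).cardinal_lift_le_rank
  simpa [sq] using hrank
end

section
/- Let K be a field, A a K-algebra, V a K-subspace of A with 1 ∈ V that generates A as a K-algebra (so A = ∪_n V^n), and z ∈ A. Order ℕ × ℕ by (m₁,p₁) ≺ (m₂,p₂) iff m₁+p₁ < m₂+p₂ or (m₁+p₁ = m₂+p₂ and m₁ < m₂). Suppose there exist m, p ≥ 1 with m ≥ p such that V^m z V^p ⊆ Σ_{(i,j) ≺ (m,p)} V^i z V^j. Then A z A ⊆ V^m z A + A z V^m. -/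
theorem paperRel_wellFounded : WellFounded paperRel := by
  have : paperRel = InvImage (· < ·) (fun q : ℕ × ℕ ↦ toLex (q.1 + q.2, q.1)) := by
    ext a b
    simp [paperRel, InvImage, Prod.Lex.toLex_lt_toLex]
  exact this ▸ InvImage.wf _ wellFounded_lt

theorem paperRel_add {a b : ℕ × ℕ} (h : paperRel a b) (k l : ℕ) :
    paperRel (k + a.1, a.2 + l) (k + b.1, b.2 + l) := by
  unfold paperRel at *
  omega

section
variable {R A : Type*} [CommSemiring R] [Semiring A] [Algebra R A]

theorem Submodule.pow_mul_mul_pow_mul_mul_pow (V Z : Submodule R A) (k a b l : ℕ) :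
    V ^ k * (V ^ a * Z * V ^ b) * V ^ l = V ^ (k + a) * Z * V ^ (b + l) := by
  simp only [pow_add, mul_assoc]

theorem Submodule.pow_mul_mul_pow_le_of_paperRel {V Z T : Submodule R A} {m p : ℕ}
    (h : V ^ m * Z * V ^ p ≤ ⨆ (q : ℕ × ℕ) (_ : paperRel q (m, p)), V ^ q.1 * Z * V ^ q.2)
    (hbase : ∀ i j, i < m ∨ j < p → V ^ i * Z * V ^ j ≤ T) (i j : ℕ) :
    V ^ i * Z * V ^ j ≤ T := by
  suffices ∀ q : ℕ × ℕ, V ^ q.1 * Z * V ^ q.2 ≤ T from this (i, j)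
  intro q
  induction q using paperRel_wellFounded.induction with | _ q ih
  obtain ⟨i, j⟩ := q
  by_cases hsmall : i < m ∨ j < p
  · exact hbase i j hsmall
  obtain ⟨k, rfl⟩ := Nat.exists_eq_add_of_le' (not_lt.1 (not_or.1 hsmall).1)
  obtain ⟨l, rfl⟩ := Nat.exists_eq_add_of_le (not_lt.1 (not_or.1 hsmall).2)
  calc V ^ (k + m) * Z * V ^ (p + l)
      = V ^ k * (V ^ m * Z * V ^ p) * V ^ l := (V.pow_mul_mul_pow_mul_mul_pow Z k m p l).symm
    _ ≤ V ^ k * (⨆ (q : ℕ × ℕ) (_ : paperRel q (m, p)), V ^ q.1 * Z * V ^ q.2) * V ^ l := by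
      gcongr
    _ = ⨆ (q : ℕ × ℕ) (_ : paperRel q (m, p)), V ^ (k + q.1) * Z * V ^ (q.2 + l) := by
      simp only [Submodule.mul_iSup, Submodule.iSup_mul, Submodule.pow_mul_mul_pow_mul_mul_pow]
    _ ≤ T := iSup₂_le fun q hq ↦ ih (k + q.1, q.2 + l) (paperRel_add hq k l)

theorem Submodule.top_mul_mul_top_le {V Z T : Submodule R A} (hgen : ∀ a : A, ∃ n, a ∈ V ^ n)
    (hT : ∀ i j, V ^ i * Z * V ^ j ≤ T) : ⊤ * Z * ⊤ ≤ T := by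
  have htop : (⊤ : Submodule R A) = ⨆ n, V ^ n :=
    (top_unique fun a _ ↦ (hgen a).elim fun n hn ↦ Submodule.mem_iSup_of_mem n hn).symm
  simp only [htop, Submodule.iSup_mul, Submodule.mul_iSup, iSup_le_iff]
  exact fun _ _ ↦ hT _ _
end

theorem stmt4_general {K A : Type*} [Field K] [Ring A] [Algebra K A]
    (V : Submodule K A) (hV : (1 : A) ∈ V)
    (hgen : ∀ a : A, ∃ n : ℕ, a ∈ V ^ n) (z : A) (m p : ℕ) (hmp : p ≤ m)
    (h : V ^ m * Submodule.span K {z} * V ^ p ≤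
      ⨆ (q : ℕ × ℕ) (_ : paperRel q (m, p)), V ^ q.1 * Submodule.span K {z} * V ^ q.2) :
    (⊤ : Submodule K A) * Submodule.span K {z} * ⊤ ≤
      V ^ m * Submodule.span K {z} * ⊤ + ⊤ * Submodule.span K {z} * V ^ m := by
  have hV1 : 1 ≤ V := Submodule.one_le.2 hV
  refine Submodule.top_mul_mul_top_le hgen (Submodule.pow_mul_mul_pow_le_of_paperRel h ?_)
  rintro i j (hi | hj)
  · refine le_sup_of_le_left ?_
    gcongr
    exact le_top
  · have hjm : j ≤ m := hj.le.trans hmp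
    refine le_sup_of_le_right ?_
    gcongr
    exact le_top

theorem stmt4 {K A : Type*} [Field K] [Ring A] [Algebra K A]
    (V : Submodule K A) (hV : (1 : A) ∈ V)
    (hgen : ∀ a : A, ∃ n : ℕ, a ∈ V ^ n) (z : A) (m p : ℕ) (hp : 1 ≤ p) (hmp : p ≤ m)
    (h : V ^ m * Submodule.span K {z} * V ^ p ≤
      ⨆ (q : ℕ × ℕ) (_ : paperRel q (m, p)), V ^ q.1 * Submodule.span K {z} * V ^ q.2) :
    (⊤ : Submodule K A) * Submodule.span K {z} * ⊤ ≤
      V ^ m * Submodule.span K {z} * ⊤ + ⊤ * Submodule.span K {z} * V ^ m :=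
  stmt4_general V hV hgen z m p hmp h
end

section
/- Let K be a field, let A be a prime K-algebra, let V be a K-subspace of A with 1 ∈ V, let d ≥ 1, and let u ∈ A. Suppose that A u A ⊆ V^d u A + A u V^d, and that there exists k ≥ 1 with (V^d u)^k = (0) and (u V^d)^k = (0). Then u = 0. -/
/-!
Let `U = K u` and `P = V^d U`. Since `P` is nilpotent and `u ≠ 0`, there is a largest `m` with
`X = U P^m ≠ 0`, so `X P = 0`; and `(U V^d) X = U P^(m+1) = 0` as well. The hypothesis on `A u A`
then kills `X (A u A) X`, which is impossible in a prime ring for `X ≠ 0 ≠ u`.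
-/

theorem exists_mul_pow_ne_zero_and_mul_eq_zero {M : Type*} [MonoidWithZero M] {x p : M}
    (hx : x ≠ 0) : ∀ {k : ℕ}, x * p ^ k = 0 → ∃ m, x * p ^ m ≠ 0 ∧ x * p ^ m * p = 0
  | 0, hk => absurd (by simpa using hk) hx
  | k + 1, hk => by
    by_cases hpk : x * p ^ k = 0
    · exact exists_mul_pow_ne_zero_and_mul_eq_zero hx hpk
    · exact ⟨k, hpk, by rwa [mul_assoc, ← pow_succ]⟩

namespace Submodule

variable {K A : Type*} [CommSemiring K] [Semiring A] [Algebra K A]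

theorem mul_mul_mul_eq_bot_of_le_add {U W X : Submodule K A}
    (h : ⊤ * U * ⊤ ≤ W * U * ⊤ + ⊤ * U * W)
    (hXP : X * (W * U) = ⊥) (hQX : U * W * X = ⊥) :
    X * (⊤ * U * ⊤) * X = ⊥ := by
  refine le_bot_iff.mp ?_
  calc X * (⊤ * U * ⊤) * X ≤ X * (W * U * ⊤ + ⊤ * U * W) * X := by gcongr
    _ = X * (W * U) * ⊤ * X + X * ⊤ * (U * W * X) := by simp only [mul_add, add_mul, mul_assoc]
    _ = ⊥ := by rw [hXP, hQX]; simp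

theorem eq_zero_of_mul_span_mul_eq_bot
    (hprime : ∀ a b : A, (∀ r : A, a * r * b = 0) → a = 0 ∨ b = 0)
    {X : Submodule K A} (hX : X ≠ ⊥) {u : A}
    (h : X * (⊤ * span K {u} * ⊤) * X = ⊥) : u = 0 := by
  obtain ⟨x, hxX, hx0⟩ := (Submodule.ne_bot_iff X).mp hX
  have hxrusx : ∀ r s : A, x * (r * u * s) * x = 0 := fun r s => by
    have hmem : x * (r * u * s) * x ∈ X * (⊤ * span K {u} * ⊤) * X :=
      mul_mem_mul (mul_mem_mul hxX (mul_mem_mul (mul_mem_mul mem_top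
        (mem_span_singleton_self u)) mem_top)) hxX
    rwa [h, mem_bot] at hmem
  have husx : ∀ s : A, u * s * x = 0 := fun s =>
    (hprime x _ fun r => by simpa only [mul_assoc] using hxrusx r s).resolve_left hx0
  exact (hprime u x husx).resolve_right hx0

end Submodule

open Submodule in
theorem stmt6_general {K A : Type*} [Field K] [Ring A] [Algebra K A]
    (hprime : ∀ a b : A, (∀ r : A, a * r * b = 0) → a = 0 ∨ b = 0)
    (V : Submodule K A) (d : ℕ) (u : A)
    (h : (⊤ : Submodule K A) * Submodule.span K {u} * ⊤ ≤
      V ^ d * Submodule.span K {u} * ⊤ + ⊤ * Submodule.span K {u} * V ^ d)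
    (hnil : ∃ k : ℕ, 1 ≤ k ∧ (V ^ d * Submodule.span K {u}) ^ k = ⊥ ∧
      (Submodule.span K {u} * V ^ d) ^ k = ⊥) :
    u = 0 := by
  obtain ⟨k, -, hPk, -⟩ := hnil
  set U := span K {u}
  by_contra hu
  have hU : U ≠ 0 := by simpa [U] using hu
  obtain ⟨m, hX, hXP⟩ := exists_mul_pow_ne_zero_and_mul_eq_zero hU
    (k := k) (by rw [hPk, zero_eq_bot, mul_bot])
  have hQX : U * V ^ d * (U * (V ^ d * U) ^ m) = ⊥ := by
    rw [← mul_pow_mul, ← mul_assoc, ← pow_succ', mul_pow_mul, pow_succ, ← mul_assoc]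
    exact hXP
  exact hu (eq_zero_of_mul_span_mul_eq_bot hprime hX (mul_mul_mul_eq_bot_of_le_add h hXP hQX))

theorem stmt6 {K A : Type*} [Field K] [Ring A] [Algebra K A]
    (hprime : ∀ a b : A, (∀ r : A, a * r * b = 0) → a = 0 ∨ b = 0)
    (V : Submodule K A) (hV : (1 : A) ∈ V) (d : ℕ) (hd : 1 ≤ d) (u : A)
    (h : (⊤ : Submodule K A) * Submodule.span K {u} * ⊤ ≤
      V ^ d * Submodule.span K {u} * ⊤ + ⊤ * Submodule.span K {u} * V ^ d)
    (hnil : ∃ k : ℕ, 1 ≤ k ∧ (V ^ d * Submodule.span K {u}) ^ k = ⊥ ∧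
      (Submodule.span K {u} * V ^ d) ^ k = ⊥) :
    u = 0 :=
  stmt6_general hprime V d u h hnil
end

section
/- Let p : ℕ → ℕ be a function and define words over {x, y} by v₁ = x and v_{n+1} = v_n y^{p(n)} v_n. Then: (a) for every m ≥ n, v_n is a prefix of v_m; and (b) for any two factors (contiguous subwords) u and w of some v_n, there exist a word t and an index m such that the concatenation u t w is a factor of v_m. -/
/-!
Since `v_{n+1}` begins with `v_n`, the words form a prefix chain; and two factors of `v_n` are
also factors of `v_{n+1}`, so they occur in the left and in the right copy of `v_{n+1}` inside
`v_{n+2} = v_{n+1} y^{p(n+1)} v_{n+1}`, with the stretch between them as `t`.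
-/

/-- The words `v₁ = x`, `v_{n+1} = v_n y^{p(n)} v_n`, over the alphabet `{x, y}`
encoded as `Bool` with `x = true`, `y = false`. (`v₀ := []` is a junk value.) -/
def zelWord (p : ℕ → ℕ) : ℕ → List Bool
  | 0 => []
  | 1 => [true]
  | (n + 2) => zelWord p (n + 1) ++ List.replicate (p (n + 1)) false ++ zelWord p (n + 1)

open List

theorem List.IsInfix.exists_append_infix_append {α : Type*} {u v w v' : List α} (s : List α)
    (hu : u <:+: v) (hw : w <:+: v') : ∃ t, u ++ t ++ w <:+: v ++ s ++ v' := by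
  obtain ⟨a, b, rfl⟩ := hu
  obtain ⟨c, d, rfl⟩ := hw
  exact ⟨b ++ s ++ c, a, d, by simp⟩

theorem zelWord_add_two (p : ℕ → ℕ) (n : ℕ) :
    zelWord p (n + 2) = zelWord p (n + 1) ++ replicate (p (n + 1)) false ++ zelWord p (n + 1) :=
  rfl

theorem zelWord_prefix_succ (p : ℕ → ℕ) : ∀ n, zelWord p n <+: zelWord p (n + 1)
  | 0 => nil_prefix
  | n + 1 => by
    rw [zelWord_add_two]
    exact (prefix_append _ _).trans (prefix_append _ _)

theorem zelWord_prefix_of_le (p : ℕ → ℕ) {n m : ℕ} (h : n ≤ m) : zelWord p n <+: zelWord p m := by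
  induction m, h using Nat.le_induction with
  | base => exact prefix_refl _
  | succ m _ ih => exact ih.trans (zelWord_prefix_succ p m)

theorem stmt9 (p : ℕ → ℕ) :
    (∀ n m : ℕ, 1 ≤ n → n ≤ m → (zelWord p n) <+: (zelWord p m)) ∧
    (∀ (n : ℕ) (u w : List Bool), u <:+: zelWord p n → w <:+: zelWord p n →
      ∃ (t : List Bool) (m : ℕ), (u ++ t ++ w) <:+: zelWord p m) := by
  refine ⟨fun n m _ h => zelWord_prefix_of_le p h, fun n u w hu hw => ?_⟩
  have hsucc := (zelWord_prefix_succ p n).isInfix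
  obtain ⟨t, ht⟩ := (hu.trans hsucc).exists_append_infix_append (replicate (p (n + 1)) false)
    (hw.trans hsucc)
  exact ⟨t, n + 2, zelWord_add_two p n ▸ ht⟩
end

section
/- Let K be a field and let A be a finitely generated infinite-dimensional K-algebra such that A/I is finite-dimensional over K for every nonzero two-sided ideal I of A (i.e., A is just infinite). Then A is a prime ring. -/
/-!
Suppose `a A b = 0` with `a, b ≠ 0`. The two-sided ideals `I = AaA` and `J = AbA` are nonzero with
`IJ = 0`. If `I ∩ J = 0`, then `A` embeds in `A/I × A/J`. Otherwise `N = I ∩ J` is a nonzero ideal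
with `N² = 0` and `A/N` finite-dimensional. Write `A = V + N` with `V` finite-dimensional and
`1 ∈ V`, and let `G ⊆ N` be a finite-dimensional subspace such that `V + G` contains `V²` and a
generating set of `A`. Then `V + AGA` is a subalgebra containing the generators, so it is all of
`A`; and `AGA = (V + N) G (V + N) = VGV` because `NG = GN = 0`. Hence `A = V + VGV` is
finite-dimensional.
-/

open Submodule

namespace Submodule

section Semiring

variable {R A : Type*} [CommSemiring R] [Semiring A] [Algebra R A]

theorem le_top_mul_mul_top (X : Submodule R A) : X ≤ ⊤ * X * ⊤ := fun x hx => by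
  simpa using mul_mem_mul (mul_mem_mul (mem_top : (1 : A) ∈ ⊤) hx) (mem_top : (1 : A) ∈ ⊤)

theorem top_mul_top : (⊤ : Submodule R A) * ⊤ = ⊤ :=
  top_unique fun x _ => by simpa using mul_mem_mul mem_top (mem_top : (1 : A) ∈ ⊤)

theorem mul_top_mul_mul_top_le (X Y : Submodule R A) : Y * (⊤ * X * ⊤) ≤ ⊤ * X * ⊤ :=
  calc Y * (⊤ * X * ⊤) ≤ ⊤ * (⊤ * X * ⊤) := mul_le_mul' le_top le_rfl
    _ = ⊤ * X * ⊤ := by rw [← mul_assoc, ← mul_assoc, top_mul_top]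

theorem top_mul_mul_top_mul_le (X Y : Submodule R A) : ⊤ * X * ⊤ * Y ≤ ⊤ * X * ⊤ :=
  calc ⊤ * X * ⊤ * Y ≤ ⊤ * X * ⊤ * ⊤ := mul_le_mul' le_rfl le_top
    _ = ⊤ * X * ⊤ := by rw [mul_assoc _ ⊤, top_mul_top]

theorem mul_mem_top_mul_mul_top (X : Submodule R A) :
    ∀ x ∈ ⊤ * X * ⊤, ∀ r : A, r * x ∈ ⊤ * X * ⊤ ∧ x * r ∈ ⊤ * X * ⊤ := fun _ hx _ =>
  ⟨mul_top_mul_mul_top_le X ⊤ (mul_mem_mul mem_top hx),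
    top_mul_mul_top_mul_le X ⊤ (mul_mem_mul hx mem_top)⟩

theorem top_mul_mul_top_mul_top_mul_mul_top (X Y : Submodule R A) :
    ⊤ * X * ⊤ * (⊤ * Y * ⊤) = ⊤ * (X * ⊤ * Y) * ⊤ := by
  simp only [← mul_assoc]
  rw [mul_assoc (⊤ * X) ⊤ ⊤, top_mul_top]

theorem span_singleton_mul_top_mul_span_singleton_eq_bot {a b : A} (hab : ∀ r : A, a * r * b = 0) :
    (R ∙ a) * ⊤ * (R ∙ b) = ⊥ := by
  rw [span_singleton_mul, eq_bot_iff, mul_le]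
  rintro _ ⟨m, -, rfl⟩ y hy
  obtain ⟨c, rfl⟩ := mem_span_singleton.mp hy
  simp [hab]

theorem top_mul_mul_top_le_of_sup_eq_top {V N X : Submodule R A} (hVN : V ⊔ N = ⊤)
    (hXN : X ≤ N) (hNN : N * N = ⊥) : ⊤ * X * ⊤ ≤ V * X * V := by
  have hNX : N * X = ⊥ := le_bot_iff.mp (hNN ▸ mul_le_mul' le_rfl hXN)
  have hXN' : X * N = ⊥ := le_bot_iff.mp (hNN ▸ mul_le_mul' hXN le_rfl)
  rw [← hVN, sup_mul V N X, hNX, sup_bot_eq, mul_sup, mul_assoc V X N, hXN', mul_bot, sup_bot_eq]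

theorem sup_top_mul_mul_top_eq_top {V G : Submodule R A} {s : Set A} (h1V : (1 : A) ∈ V)
    (hVV : V * V ≤ V ⊔ G) (hs : Algebra.adjoin R s = ⊤) (hsVG : s ⊆ (V ⊔ G : Submodule R A)) :
    V ⊔ ⊤ * G * ⊤ = ⊤ := by
  set P := V ⊔ ⊤ * G * ⊤
  have hVGP : V ⊔ G ≤ P := sup_le_sup_left (le_top_mul_mul_top G) V
  have hPP : P * P ≤ P := by
    rw [sup_mul, mul_sup, mul_sup]
    exact sup_le (sup_le (hVV.trans hVGP) (mul_top_mul_mul_top_le G V |>.trans le_sup_right))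
      (sup_le (top_mul_mul_top_mul_le G V |>.trans le_sup_right)
        (top_mul_mul_top_mul_le G _ |>.trans le_sup_right))
  let B : Subalgebra R A :=
    P.toSubalgebra (mem_sup_left h1V) fun _ _ hx hy => hPP (mul_mem_mul hx hy)
  have hB : Algebra.adjoin R s ≤ B := Algebra.adjoin_le fun x hx => hVGP (hsVG hx)
  exact top_unique fun x _ => hB (hs ▸ Algebra.mem_top : x ∈ Algebra.adjoin R s)

end Semiring

section Field

variable {K A : Type*} [Field K] [Ring A] [Algebra K A]

theorem exists_fg_one_mem_sup_eq_top (N : Submodule K A) [FiniteDimensional K (A ⧸ N)] :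
    ∃ V : Submodule K A, V.FG ∧ (1 : A) ∈ V ∧ V ⊔ N = ⊤ := by
  obtain ⟨C, hC⟩ := N.exists_isCompl
  have hCfg : C.FG :=
    Module.Finite.iff_fg.mp (Module.Finite.equiv (quotientEquivOfIsCompl N C hC))
  refine ⟨C ⊔ K ∙ 1, hCfg.sup (fg_span_singleton 1), mem_sup_right (mem_span_singleton_self 1), ?_⟩
  exact top_unique (hC.sup_eq_top ▸ sup_comm N C ▸ sup_le_sup_right le_sup_left N)

theorem finiteDimensional_of_mul_self_eq_bot [Algebra.FiniteType K A] (N : Submodule K A)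
    [FiniteDimensional K (A ⧸ N)] (hNN : N * N = ⊥) : FiniteDimensional K A := by
  obtain ⟨V, hVfg, h1V, hVN⟩ := N.exists_fg_one_mem_sup_eq_top
  obtain ⟨s, hs⟩ := Algebra.FiniteType.out (R := K) (A := A)
  set W := V ⊔ V * V ⊔ span K s
  have hWfg : W.FG := (hVfg.sup (hVfg.mul hVfg)).sup (fg_span s.finite_toSet)
  set G := N ⊓ W
  have hWVG : W ≤ V ⊔ G := le_of_eq <|
    calc W = (V ⊔ N) ⊓ W := by rw [hVN, top_inf_eq]
      _ = V ⊔ G := sup_inf_assoc_of_le N (le_sup_left.trans le_sup_left)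
  have hP := sup_top_mul_mul_top_eq_top h1V (le_sup_right.trans (le_sup_left.trans hWVG)) hs
    fun x hx => hWVG (mem_sup_right (subset_span hx))
  have htop : V ⊔ V * G * V = ⊤ :=
    top_unique (hP ▸ sup_le_sup_left (top_mul_mul_top_le_of_sup_eq_top hVN inf_le_left hNN) V)
  have hGfg : G.FG := hWfg.of_le inf_le_right
  exact Module.finite_def.mpr (htop ▸ hVfg.sup ((hVfg.mul hGfg).mul hVfg))

theorem finiteDimensional_of_inf_eq_bot {I J : Submodule K A} [FiniteDimensional K (A ⧸ I)]
    [FiniteDimensional K (A ⧸ J)] (hIJ : I ⊓ J = ⊥) : FiniteDimensional K A := by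
  refine FiniteDimensional.of_injective (I.mkQ.prod J.mkQ) ?_
  rw [← LinearMap.ker_eq_bot, LinearMap.ker_prod, ker_mkQ, ker_mkQ, hIJ]

end Field

end Submodule

theorem stmt15 {K A : Type*} [Field K] [Ring A] [Algebra K A]
    (hfg : Algebra.FiniteType K A)
    (hinf : ¬ FiniteDimensional K A)
    -- every nonzero two-sided ideal (viewed as a `K`-subspace closed under
    -- multiplication by `A` on both sides) has finite codimension
    (hji : ∀ I : Submodule K A, I ≠ ⊥ →
      (∀ a ∈ I, ∀ r : A, r * a ∈ I ∧ a * r ∈ I) →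
      FiniteDimensional K (A ⧸ I)) :
    ∀ a b : A, (∀ r : A, a * r * b = 0) → a = 0 ∨ b = 0 := by
  intro a b hab
  by_contra! hne
  apply hinf
  set I := ⊤ * (K ∙ a) * ⊤
  set J := ⊤ * (K ∙ b) * ⊤
  have hIideal := mul_mem_top_mul_mul_top (K ∙ a)
  have hJideal := mul_mem_top_mul_mul_top (K ∙ b)
  have := hji I ((Submodule.ne_bot_iff I).mpr
    ⟨a, le_top_mul_mul_top _ (mem_span_singleton_self a), hne.1⟩) hIideal
  have := hji J ((Submodule.ne_bot_iff J).mpr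
    ⟨b, le_top_mul_mul_top _ (mem_span_singleton_self b), hne.2⟩) hJideal
  by_cases hN : I ⊓ J = ⊥
  · exact finiteDimensional_of_inf_eq_bot hN
  have hIJ : I * J = ⊥ := by
    rw [top_mul_mul_top_mul_top_mul_mul_top, span_singleton_mul_top_mul_span_singleton_eq_bot hab,
      mul_bot, bot_mul]
  have := hji (I ⊓ J) hN fun x hx r =>
    ⟨⟨(hIideal x hx.1 r).1, (hJideal x hx.2 r).1⟩, ⟨(hIideal x hx.1 r).2, (hJideal x hx.2 r).2⟩⟩
  exact finiteDimensional_of_mul_self_eq_bot (I ⊓ J)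
    (le_bot_iff.mp (hIJ ▸ mul_le_mul' inf_le_left inf_le_right))
end

section
/- Let K be a field, A a K-algebra, V a K-subspace with 1 ∈ V, and u ∈ V^k an element of A. Suppose there exist natural numbers i, m, p with p > m ≥ 1 such that u^i V^m ⊆ u^i V^{m-1} + u^{i+1} V^p. Then for all n > i, u^i V^n ⊆ u^i V^{m-1} + u^{i+1} V^{m-1} + ⋯ + u^{n-1} V^{m-1} + u^n V^{np+n}. -/
/-!
Submodules of a `K`-algebra form an idempotent semiring (`+` is `⊔`), and the argument works in any
idempotent semiring with `1 ≤ V`. Multiplying the hypothesis on the left by powers of `U` moves it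
from `U ^ i` to every `U ^ j` with `j ≥ i`. For fixed `j`, the bound
`U ^ j * V ^ t ≤ U ^ j * V ^ (m - 1) + U ^ (j + 1) * V ^ (p + t)` is raised from `t` to `t + 1` by
multiplying on the right by `V` and feeding the term `U ^ j * V ^ m` back into the hypothesis.
Applying this once for each `j = i, …, n - 1` peels off the terms `U ^ j * V ^ (m - 1)` one at a time.
-/

section IdemSemiring

variable {S : Type*} [IdemSemiring S] {V : S}

theorem mul_pow_le_of_mul_pow_succ_le (hV : 1 ≤ V) {a b : S} {l p : ℕ}
    (h : a * V ^ (l + 1) ≤ a * V ^ l + b * V ^ p) (t : ℕ) :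
    a * V ^ t ≤ a * V ^ l + b * V ^ (p + t) := by
  induction t with
  | zero => simpa using le_add_right (mul_le_mul_right (one_le_pow_of_one_le' hV l) a)
  | succ t ih =>
    have hp : b * V ^ p ≤ b * V ^ (p + t + 1) := by
      gcongr
      omega
    calc a * V ^ (t + 1) = a * V ^ t * V := by rw [pow_succ, mul_assoc]
      _ ≤ (a * V ^ l + b * V ^ (p + t)) * V := by gcongr
      _ = a * V ^ (l + 1) + b * V ^ (p + t + 1) := by
        rw [add_mul, mul_assoc, mul_assoc, ← pow_succ, ← pow_succ]
      _ ≤ a * V ^ l + b * V ^ p + b * V ^ (p + t + 1) := by gcongr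
      _ = a * V ^ l + b * V ^ (p + t + 1) := by
        rw [add_assoc, add_eq_sup (b * _), sup_eq_right.2 hp]

theorem pow_mul_pow_succ_le_of_le {U : S} {i j l p : ℕ} (hij : i ≤ j)
    (h : U ^ i * V ^ (l + 1) ≤ U ^ i * V ^ l + U ^ (i + 1) * V ^ p) :
    U ^ j * V ^ (l + 1) ≤ U ^ j * V ^ l + U ^ (j + 1) * V ^ p := by
  obtain ⟨d, rfl⟩ := Nat.exists_eq_add_of_le' hij
  calc U ^ (d + i) * V ^ (l + 1) = U ^ d * (U ^ i * V ^ (l + 1)) := by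
        rw [← mul_assoc, ← pow_add]
    _ ≤ U ^ d * (U ^ i * V ^ l + U ^ (i + 1) * V ^ p) := by gcongr
    _ = U ^ (d + i) * V ^ l + U ^ (d + i + 1) * V ^ p := by
        rw [mul_add, ← mul_assoc, ← mul_assoc, ← pow_add, ← pow_add, add_assoc]

theorem pow_mul_pow_le_sum_add (hV : 1 ≤ V) {U : S} {i l p : ℕ}
    (h : U ^ i * V ^ (l + 1) ≤ U ^ i * V ^ l + U ^ (i + 1) * V ^ p) (t s : ℕ) :
    U ^ i * V ^ t ≤
      (∑ j ∈ Finset.Ico i (i + s), U ^ j * V ^ l) + U ^ (i + s) * V ^ (s * p + t) := by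
  induction s with
  | zero => simp
  | succ s ih =>
    have hstep := mul_pow_le_of_mul_pow_succ_le hV
      (pow_mul_pow_succ_le_of_le (Nat.le_add_right i s) h) (s * p + t)
    calc U ^ i * V ^ t
        ≤ (∑ j ∈ Finset.Ico i (i + s), U ^ j * V ^ l) + U ^ (i + s) * V ^ (s * p + t) := ih
      _ ≤ (∑ j ∈ Finset.Ico i (i + s), U ^ j * V ^ l) +
            (U ^ (i + s) * V ^ l + U ^ (i + s + 1) * V ^ (p + (s * p + t))) := by gcongr
      _ = (∑ j ∈ Finset.Ico i (i + s + 1), U ^ j * V ^ l) +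
            U ^ (i + s + 1) * V ^ ((s + 1) * p + t) := by
        rw [← add_assoc, Finset.sum_Ico_succ_top (Nat.le_add_right i s)]
        ring_nf

end IdemSemiring

theorem stmt17_general {K A : Type*} [Field K] [Ring A] [Algebra K A]
    (V : Submodule K A) (hV : (1 : A) ∈ V) (u : A)
    (i m p : ℕ) (hm : 1 ≤ m)
    (h : Submodule.span K {u ^ i} * V ^ m ≤
      Submodule.span K {u ^ i} * V ^ (m - 1) + Submodule.span K {u ^ (i + 1)} * V ^ p) :
    ∀ n : ℕ, i < n →
      Submodule.span K {u ^ i} * V ^ n ≤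
        (∑ j ∈ Finset.Ico i n, Submodule.span K {u ^ j} * V ^ (m - 1)) +
          Submodule.span K {u ^ n} * V ^ (n * p + n) := by
  intro n hn
  obtain ⟨l, rfl⟩ := Nat.exists_eq_add_of_le' hm
  obtain ⟨s, rfl⟩ := Nat.exists_eq_add_of_le hn.le
  have hV1 : 1 ≤ V := Submodule.one_le.2 hV
  simp only [← Set.singleton_pow, ← Submodule.span_pow, Nat.add_sub_cancel] at h ⊢
  refine (pow_mul_pow_le_sum_add hV1 h (i + s) s).trans ?_
  gcongr
  nlinarith

theorem stmt17 {K A : Type*} [Field K] [Ring A] [Algebra K A]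
    (V : Submodule K A) (hV : (1 : A) ∈ V) (k : ℕ) (u : A) (hu : u ∈ V ^ k)
    (i m p : ℕ) (hm : 1 ≤ m) (hmp : m < p)
    (h : Submodule.span K {u ^ i} * V ^ m ≤
      Submodule.span K {u ^ i} * V ^ (m - 1) + Submodule.span K {u ^ (i + 1)} * V ^ p) :
    ∀ n : ℕ, i < n →
      Submodule.span K {u ^ i} * V ^ n ≤
        (∑ j ∈ Finset.Ico i n, Submodule.span K {u ^ j} * V ^ (m - 1)) +
          Submodule.span K {u ^ n} * V ^ (n * p + n) :=
  stmt17_general V hV u i m p hm h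
end

section
/- There exists a constant C > 0 such that for every n ≥ 3 and every factor w of the infinite word v_∞ of length n, the number of occurrences of the letter x in w is at most C·log log n, where v_∞ is the limit of the words defined by v₁ = x, v_{n+1} = v_n y^{p_n} v_n with p_n = 2^(2^(2^(2^n))). -/
/-!
Two successive occurrences of `x` in `v_∞` are separated by a block `y^{p_i}`, and a factor
containing more than `2^j` occurrences of `x` must contain a whole block `y^{p_i}` with `i ≥ j`.
Hence a factor of length `n` with `k > 2^j ≥ k / 2` occurrences of `x` satisfies
`2^(2^(2^(2^j))) = p_j ≤ n`, which gives `k ≤ 2^(j+1) ≤ (2 / log 2) · log log n`.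
-/

open Real

namespace List

variable {α : Type*} [BEq α] [LawfulBEq α] {x y : α}

theorem count_eq_zero_of_sublist_replicate (hxy : x ≠ y) {l : List α} {k : ℕ}
    (h : l <+ replicate k y) : l.count x = 0 :=
  count_eq_zero.2 fun hx => hxy (eq_of_mem_replicate (h.subset hx))

theorem exists_infix_count_eq_of_infix_append_replicate_append (hxy : x ≠ y)
    {w a b : List α} {k : ℕ} (hw : w <:+: a ++ replicate k y ++ b) (hk : w.length < k) :
    ∃ w', w' <:+: w ∧ (w' <:+: a ∨ w' <:+: b) ∧ w'.count x = w.count x := by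
  rcases infix_append_iff.1 hw with hw | hw | ⟨s, t, rfl, hs, ht⟩
  · rcases infix_append_iff.1 hw with hw | hw | ⟨s, t, rfl, hs, ht⟩
    · exact ⟨w, infix_refl w, .inl hw, rfl⟩
    · exact ⟨[], nil_infix, .inl nil_infix, by
        rw [count_nil, count_eq_zero_of_sublist_replicate hxy hw.sublist]⟩
    · exact ⟨s, (prefix_append s t).isInfix, .inl hs.isInfix, by
        rw [count_append, count_eq_zero_of_sublist_replicate hxy ht.sublist, Nat.add_zero]⟩
  · exact ⟨w, infix_refl w, .inr hw, rfl⟩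
  · have hsY : s <:+ replicate k y := by
      refine (suffix_or_suffix_of_suffix hs (suffix_append a _)).resolve_right fun hY => ?_
      have := hY.length_le
      simp only [length_append, length_replicate] at this hk
      omega
    exact ⟨t, (suffix_append s t).isInfix, .inr ht.isInfix, by
      rw [count_append, count_eq_zero_of_sublist_replicate hxy hsY.sublist, Nat.zero_add]⟩

end List

section ZelWord

open List

variable {p : ℕ → ℕ}

theorem count_true_zelWord (m : ℕ) : (zelWord p (m + 1)).count true = 2 ^ m := by
  induction m with
  | zero => rfl
  | succ m ih =>
    rw [zelWord, count_append, count_append, ih, count_replicate]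
    simp only [beq_true, Bool.false_eq_true, ↓reduceIte, add_zero]
    ring

theorem count_true_le_of_infix_zelWord (hp : Monotone p) {m j : ℕ} {w : List Bool}
    (hw : w <:+: zelWord p m) (hj : w.length < p j) : w.count true ≤ 2 ^ j := by
  suffices h : ∀ m (w : List Bool), w <:+: zelWord p (m + 1) → w.length < p j →
      w.count true ≤ 2 ^ j by
    cases m with
    | zero => exact h 0 w (hw.trans nil_infix) hj
    | succ m => exact h m w hw hj
  intro m
  induction m with
  | zero =>
    intro w hw hj
    calc w.count true ≤ [true].count true := hw.sublist.count_le true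
      _ ≤ 2 ^ j := Nat.one_le_two_pow
  | succ m ih =>
    intro w hw hj
    rcases lt_or_ge w.length (p (m + 1)) with hshort | hlong
    · obtain ⟨w', hw'w, hw', hcount⟩ :=
        exists_infix_count_eq_of_infix_append_replicate_append Bool.true_eq_false.mp
          hw hshort
      rw [← hcount]
      exact ih w' (hw'.elim id id) (hw'w.length_le.trans_lt hj)
    · have hmj : m + 1 < j := hp.reflect_lt (hlong.trans_lt hj)
      calc w.count true ≤ (zelWord p (m + 2)).count true := hw.sublist.count_le true
        _ = 2 ^ (m + 1) := count_true_zelWord (m + 1)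
        _ ≤ 2 ^ j := Nat.pow_le_pow_right two_pos hmj.le

end ZelWord

theorem Nat.exists_two_pow_lt_le_two_mul {k : ℕ} (hk : 1 < k) :
    ∃ j, 2 ^ j < k ∧ k ≤ 2 * 2 ^ j := by
  refine ⟨Nat.log 2 (k - 1), ?_, ?_⟩
  · have := Nat.pow_log_le_self 2 (show k - 1 ≠ 0 by omega)
    omega
  · have := Nat.lt_pow_succ_log_self one_lt_two (k - 1)
    rw [pow_succ] at this
    omega

theorem mul_log_two_le_log_log {a : ℕ} {x : ℝ} (hx : (2 : ℝ) ^ 2 ^ 2 ^ a ≤ x) :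
    a * log 2 ≤ log (log x) := by
  have hlog2 : (1 : ℝ) / 2 < log 2 := by linarith [log_two_gt_d9]
  have hpow : (2 : ℝ) ^ (a + 1) ≤ 2 ^ 2 ^ a := by
    exact_mod_cast Nat.pow_le_pow_right two_pos (Nat.lt_two_pow_self (n := a))
  have hlogx : (2 : ℝ) ^ a ≤ log x :=
    calc (2 : ℝ) ^ a = 2 ^ (a + 1) * (1 / 2) := by ring
      _ ≤ 2 ^ 2 ^ a * log 2 := by gcongr
      _ = log ((2 : ℝ) ^ 2 ^ 2 ^ a) := by rw [log_pow]; push_cast; ring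
      _ ≤ log x := log_le_log (by positivity) hx
  calc (a : ℝ) * log 2 = log ((2 : ℝ) ^ a) := by rw [log_pow]
    _ ≤ log (log x) := log_le_log (by positivity) hlogx

theorem count_true_mul_log_two_le_log_log {m : ℕ} {w : List Bool}
    (hw : w <:+: zelWord (fun i => 2 ^ (2 ^ (2 ^ (2 ^ i)))) m) (hk : 1 < w.count true) :
    w.count true * log 2 ≤ 2 * log (log w.length) := by
  obtain ⟨j, hlow, hhigh⟩ := Nat.exists_two_pow_lt_le_two_mul hk
  have hpj : 2 ^ 2 ^ 2 ^ 2 ^ j ≤ w.length :=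
    not_lt.1 fun h => hlow.not_ge (count_true_le_of_infix_zelWord
      (fun _ _ h => by gcongr <;> norm_num) hw h)
  have hj : (2 : ℝ) ^ j * log 2 ≤ log (log w.length) := by
    exact_mod_cast mul_log_two_le_log_log (a := 2 ^ j) (by exact_mod_cast hpj)
  have hk' : (w.count true : ℝ) ≤ 2 * 2 ^ j := by exact_mod_cast hhigh
  nlinarith [log_pos one_lt_two]

theorem stmt19 :
    ∃ C : ℝ, 0 < C ∧ ∀ n : ℕ, 3 ≤ n → ∀ w : List Bool, w.length = n →
      (∃ m : ℕ, w <:+: zelWord (fun i => 2 ^ (2 ^ (2 ^ (2 ^ i)))) m) →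
      (w.count true : ℝ) ≤ C * Real.log (Real.log n) := by
  have hlog2 : 0 < log 2 := log_pos one_lt_two
  have hlog3 : 1 < log 3 := by
    rw [lt_log_iff_exp_lt (by norm_num)]; linarith [exp_one_lt_d9]
  have hL3 : 0 < log (log 3) := log_pos hlog3
  refine ⟨2 / log 2 + 1 / log (log 3), by positivity, ?_⟩
  rintro n hn w rfl ⟨m, hw⟩
  set L := log (log w.length)
  have hL : log (log 3) ≤ L :=
    log_le_log (by positivity) (log_le_log (by norm_num) (by exact_mod_cast hn))
  have hsmall : 0 ≤ 1 / log (log 3) * L := mul_nonneg (by positivity) (hL3.le.trans hL)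
  have hlarge : 0 ≤ 2 / log 2 * L := mul_nonneg (by positivity) (hL3.le.trans hL)
  rw [add_mul]
  rcases le_or_gt (w.count true) 1 with hk | hk
  · have hk' : (w.count true : ℝ) ≤ 1 := by exact_mod_cast hk
    have : 1 ≤ 1 / log (log 3) * L := by
      rwa [div_mul_eq_mul_div, one_mul, one_le_div hL3]
    linarith
  · have := count_true_mul_log_two_le_log_log hw hk
    have : (w.count true : ℝ) ≤ 2 / log 2 * L := by
      rw [div_mul_eq_mul_div, le_div_iff₀ hlog2]; linarith
    linarith
end
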